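/- arXiv:1105.3641 — 2 statements merged into one kernel-verified Lean document; each statement's English description precedes it below -/
import Mathlib

section
/- Let T be a directed tree, and let λ^{(i)} = {λ^{(i)}_v}_{v∈V°} (i = 1,2,3,…) and λ = {λ_v}_{v∈V°} be families of complex numbers such that: (i) the linear span E of {e_u : u ∈ V} satisfies E ⊆ D^∞(S_λ) ∩ ⋂_{i=1}^∞ D^∞(S_{λ^{(i)}}); (ii) lim_{i→∞} λ^{(i)}_v = λ_v for all v ∈ V°; (iii) lim_{i→∞} ‖S_{λ^{(i)}}^n e_u‖ = ‖S_λ^n e_u‖ for all n ∈ ℤ₊ and u ∈ V. Then ⟨S_λ^m e_u, S_λ^n e_v⟩ = lim_{i→∞} ⟨S_{λ^{(i)}}^m e_u, S_{λ^{(i)}}^n e_v⟩ for all u, v ∈ V and m, n ∈ ℤ₊. -/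
open MeasureTheory ENNReal
open scoped NNReal
noncomputable section

/-- `μ` is a representing measure of the sequence `t`. -/
def IsRepMeasure (μ : Measure ℝ≥0) (t : ℕ → ℝ) : Prop :=
  ∀ n : ℕ, Integrable (fun s : ℝ≥0 => (s : ℝ) ^ n) μ ∧ t n = ∫ s, (s : ℝ) ^ n ∂μ

/-- `t` is a Stieltjes moment sequence. -/
def IsStieltjesMoment (t : ℕ → ℝ) : Prop := ∃ μ : Measure ℝ≥0, IsRepMeasure μ t

/-- `t` is a determinate Stieltjes moment sequence. -/
def IsDetStieltjesMoment (t : ℕ → ℝ) : Prop := ∃! μ : Measure ℝ≥0, IsRepMeasure μ t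

section Operators

universe u
variable {H : Type u} [NormedAddCommGroup H] [InnerProductSpace ℂ H]

/-- The maximal domain of the composition `S ∘ T`. -/
def compDomain (S T : H →ₗ.[ℂ] H) : Submodule ℂ H where
  carrier := {x | ∃ hx : x ∈ T.domain, T ⟨x, hx⟩ ∈ S.domain}
  zero_mem' := ⟨T.domain.zero_mem, by
    have h0 : (⟨0, T.domain.zero_mem⟩ : T.domain) = 0 := rfl
    rw [h0, LinearPMap.map_zero]; exact S.domain.zero_mem⟩
  add_mem' := by
    rintro x y ⟨hx, hx'⟩ ⟨hy, hy'⟩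
    refine ⟨T.domain.add_mem hx hy, ?_⟩
    have : (⟨x + y, T.domain.add_mem hx hy⟩ : T.domain) = ⟨x, hx⟩ + ⟨y, hy⟩ := rfl
    rw [this, LinearPMap.map_add]
    exact S.domain.add_mem hx' hy'
  smul_mem' := by
    rintro c x ⟨hx, hx'⟩
    refine ⟨T.domain.smul_mem c hx, ?_⟩
    have : (⟨c • x, T.domain.smul_mem c hx⟩ : T.domain) = c • (⟨x, hx⟩ : T.domain) := rfl
    rw [this, LinearPMap.map_smul]
    exact S.domain.smul_mem c hx'

/-- Composition `S ∘ T` of partial operators, on the maximal domain. -/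
def pmapComp (S T : H →ₗ.[ℂ] H) : H →ₗ.[ℂ] H :=
  S.comp (T.domRestrict (compDomain S T)) (by
    rintro ⟨x, hx⟩
    have hxT : x ∈ T.domain := (Submodule.mem_inf.mp hx).2
    have hxD : x ∈ compDomain S T := (Submodule.mem_inf.mp hx).1
    erw [LinearPMap.domRestrict_apply (show ((⟨x, hx⟩ : ↥(compDomain S T ⊓ T.domain)) : H)
      = ((⟨x, hxT⟩ : T.domain) : H) from rfl)]
    exact hxD.choose_spec)

/-- Powers of a partial operator: `pmapPow S n = Sⁿ` with its natural domain. -/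
def pmapPow (S : H →ₗ.[ℂ] H) : ℕ → (H →ₗ.[ℂ] H)
  | 0 => LinearMap.id.toPMap ⊤
  | n + 1 => pmapComp (pmapPow S n) S

open Classical in
/-- Total (junk-valued) application of the power `Sⁿ`. -/
def powApp (S : H →ₗ.[ℂ] H) (n : ℕ) (x : H) : H :=
  if h : x ∈ (pmapPow S n).domain then (pmapPow S n) ⟨x, h⟩ else 0

/-- The set of `C^∞`-vectors of `S`. -/
def Dinf (S : H →ₗ.[ℂ] H) : Set H := {x | ∀ n : ℕ, x ∈ (pmapPow S n).domain}

/-- `F` is a core of `S`. -/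
def IsCore (S : H →ₗ.[ℂ] H) (F : Submodule ℂ H) : Prop :=
  F ≤ S.domain ∧ (S.graph : Set (H × H)) ⊆ closure ((S.domRestrict F).graph : Set (H × H))

end Operators
section Operators
universe u
variable {H : Type u} [NormedAddCommGroup H] [InnerProductSpace ℂ H]

/-- A normal (unbounded) operator: closed, densely defined, with `D(N*) = D(N)` and
`‖N* x‖ = ‖N x‖` on the common domain. -/
def IsNormalOp [CompleteSpace H] (N : H →ₗ.[ℂ] H) : Prop :=
  Dense (N.domain : Set H) ∧ N.IsClosed ∧ N.adjoint.domain = N.domain ∧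
    ∀ (x : H) (hx : x ∈ N.domain) (hx' : x ∈ N.adjoint.domain),
      ‖N.adjoint ⟨x, hx'⟩‖ = ‖N ⟨x, hx⟩‖

/-- A subnormal operator: densely defined with a normal extension in a possibly
larger Hilbert space. -/
def IsSubnormal {H : Type u} [NormedAddCommGroup H] [InnerProductSpace ℂ H]
    (S : H →ₗ.[ℂ] H) : Prop :=
  Dense (S.domain : Set H) ∧
  ∃ (K : Type u) (_ : NormedAddCommGroup K) (_ : InnerProductSpace ℂ K) (_ : CompleteSpace K)
    (J : H →ₗᵢ[ℂ] K) (N : K →ₗ.[ℂ] K), IsNormalOp N ∧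
      ∀ x : S.domain, ∃ hx : J x ∈ N.domain, N ⟨J x, hx⟩ = J (S x)

/-- A hyponormal operator. -/
def IsHyponormal [CompleteSpace H] (S : H →ₗ.[ℂ] H) : Prop :=
  Dense (S.domain : Set H) ∧
  ∀ (x : H) (hx : x ∈ S.domain), ∃ hx' : x ∈ S.adjoint.domain,
      ‖S.adjoint ⟨x, hx'⟩‖ ≤ ‖S ⟨x, hx⟩‖

end Operators

/-- A directed tree on the vertex set `V`: a connected directed graph without circuits
in which every non-root vertex has a unique parent. -/
structure DirectedTree (V : Type*) where
  edge : V → V → Prop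
  connected : ∀ u v : V, Relation.ReflTransGen (fun a b => edge a b ∨ edge b a) u v
  no_circuits : ∀ v : V, ¬ Relation.TransGen edge v v
  parent_unique : ∀ u v w : V, edge v u → edge w u → v = w

namespace DirectedTree

variable {V : Type*}

/-- The roots: vertices with no incoming edge. -/
def isRoot (T : DirectedTree V) (v : V) : Prop := ¬ ∃ u : V, T.edge u v

/-- `V°`: the non-root vertices, i.e. vertices having a parent. -/
def nonRoot (T : DirectedTree V) (v : V) : Prop := ∃ u : V, T.edge u v

open Classical in
/-- The parent function (with junk value at roots). -/
def par (T : DirectedTree V) (v : V) : V := if h : ∃ u : V, T.edge u v then h.choose else v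

/-- The set of children of a vertex. -/
def chi (T : DirectedTree V) (u : V) : Set V := {v | T.edge u v}

/-- Iterated children `Chi^n(u)`. -/
def chiN (T : DirectedTree V) : ℕ → V → Set V
  | 0, u => {u}
  | n + 1, u => ⋃ w ∈ T.chiN n u, T.chi w

/-- The descendants of `u`. -/
def des (T : DirectedTree V) (u : V) : Set V := ⋃ n : ℕ, T.chiN n u

/-- `T` is leafless: every vertex has a child. -/
def Leafless (T : DirectedTree V) : Prop := ∀ u : V, ∃ v : V, T.edge u v

/-- The product `λ_{u∣v} = ∏_{j=0}^{n-1} λ_{par^j(v)}` of the weights along the path of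
length `n` ending at `v` (for `v ∈ Chi^n(u)` this is the usual `λ_{u∣v}`). -/
def pathProd (T : DirectedTree V) (lam : V → ℂ) (n : ℕ) (v : V) : ℂ :=
  ∏ j ∈ Finset.range n, lam (T.par^[j] v)

open Classical in
/-- The formal weighted-shift transformation `Λ_T` on families of complex numbers. -/
def lamMap (T : DirectedTree V) (lam : V → ℂ) (f : V → ℂ) : V → ℂ :=
  fun v => if T.nonRoot v then lam v * f (T.par v) else 0

variable (T : DirectedTree V)

theorem lamMap_add (lam : V → ℂ) (f g : V → ℂ) :
    T.lamMap lam (f + g) = T.lamMap lam f + T.lamMap lam g := by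
  funext v; simp only [lamMap, Pi.add_apply]; split <;> ring

theorem lamMap_smul (lam : V → ℂ) (c : ℂ) (f : V → ℂ) :
    T.lamMap lam (c • f) = c • T.lamMap lam f := by
  funext v; simp only [lamMap, Pi.smul_apply, smul_eq_mul]; split <;> ring

theorem lamMap_zero (lam : V → ℂ) : T.lamMap lam (0 : V → ℂ) = 0 := by
  funext v; simp [lamMap]

/-- The domain of the weighted shift `S_λ`. -/
def shiftDomain (lam : V → ℂ) : Submodule ℂ (lp (fun _ : V => ℂ) 2) where
  carrier := {f | Memℓp (T.lamMap lam f) 2}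
  zero_mem' := by
    rw [Set.mem_setOf_eq, lp.coeFn_zero, lamMap_zero]
    exact zero_memℓp
  add_mem' := by
    intro f g hf hg
    rw [Set.mem_setOf_eq, lp.coeFn_add, lamMap_add]
    exact hf.add hg
  smul_mem' := by
    intro c f hf
    rw [Set.mem_setOf_eq, lp.coeFn_smul, lamMap_smul]
    exact hf.const_smul c

/-- The weighted shift `S_λ` on the directed tree `T`, as a partial operator in `ℓ²(V)`. -/
def shift (lam : V → ℂ) : lp (fun _ : V => ℂ) 2 →ₗ.[ℂ] lp (fun _ : V => ℂ) 2 where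
  domain := T.shiftDomain lam
  toFun :=
    { toFun := fun f => (⟨T.lamMap lam f, f.2⟩ : lp (fun _ : V => ℂ) 2)
      map_add' := by
        rintro f g
        apply lp.ext
        rw [lp.coeFn_add]
        show T.lamMap lam
            ((((f : lp (fun _ : V => ℂ) 2) : V → ℂ)) + (((g : lp (fun _ : V => ℂ) 2) : V → ℂ)))
          = T.lamMap lam ((f : lp (fun _ : V => ℂ) 2) : V → ℂ)
            + T.lamMap lam ((g : lp (fun _ : V => ℂ) 2) : V → ℂ)
        exact T.lamMap_add lam _ _
      map_smul' := by
        rintro c f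
        apply lp.ext
        rw [lp.coeFn_smul]
        show T.lamMap lam (c • (((f : lp (fun _ : V => ℂ) 2) : V → ℂ)))
          = c • T.lamMap lam ((f : lp (fun _ : V => ℂ) 2) : V → ℂ)
        exact T.lamMap_smul lam c _ }

end DirectedTree

open Classical in
/-- The basis vector `e_u` of `ℓ²(V)`. -/
def eVec {V : Type*} (u : V) : lp (fun _ : V => ℂ) 2 := lp.single 2 u 1

section MoreDefs
universe u
variable {H : Type u} [NormedAddCommGroup H] [InnerProductSpace ℂ H]

/-- The inner product, linear in the FIRST argument (the paper's convention). -/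
def innerPaper (x y : H) : ℂ := inner ℂ y x

/-- The moment sequence `n ↦ ‖Sⁿ f‖²` generated by the vector `f`. -/
def momentSeq (S : H →ₗ.[ℂ] H) (f : H) : ℕ → ℝ := fun n => ‖powApp S n f‖ ^ 2

/-- `f` is a quasi-analytic vector of `S` : `f ∈ D^∞(S)` and
`∑ₙ ‖Sⁿ f‖^{-1/n} = ∞` (with `1/0 = ∞`). -/
def IsQuasiAnalyticVec (S : H →ₗ.[ℂ] H) (f : H) : Prop :=
  (∀ n : ℕ, f ∈ (pmapPow S n).domain) ∧
  ∑' n : ℕ, ((‖powApp S (n + 1) f‖₊ ^ ((1 : ℝ) / (n + 1)) : ℝ≥0) : ℝ≥0∞)⁻¹ = ∞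

end MoreDefs

/-- The consistency condition `μ_u(σ) = ∑_{v ∈ Chi(u)} |λ_v|² ∫_σ (1/s) dμ_v(s) + ε_u δ₀(σ)`
at the vertex `u` (with the convention `1/0 = ∞`). -/
def consistentAt {V : Type*} (T : DirectedTree V) (lam : V → ℂ) (μ : V → MeasureTheory.Measure ℝ≥0)
    (ε : V → ℝ≥0) (u : V) : Prop :=
  ∀ σ : Set ℝ≥0, MeasurableSet σ →
    μ u σ = (∑' v : {v : V // T.edge u v},
        (‖lam (v : V)‖₊ : ℝ≥0∞) ^ 2 * ∫⁻ s in σ, ((s : ℝ≥0∞))⁻¹ ∂(μ (v : V)))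
      + (ε u : ℝ≥0∞) * MeasureTheory.Measure.dirac (0 : ℝ≥0) σ

/-- The sequence `{ϑ, t₀, t₁, t₂, …}` obtained by prepending `ϑ` to `t`. -/
def shiftedSeq (ϑ : ℝ) (t : ℕ → ℝ) : ℕ → ℝ := fun n => match n with
  | 0 => ϑ
  | n + 1 => t n

/-- A positive definite sequence of real numbers. -/
def IsPosDefSeq (t : ℕ → ℝ) : Prop :=
  ∀ (n : ℕ) (α : ℕ → ℂ),
    0 ≤ (∑ k ∈ Finset.range (n + 1), ∑ l ∈ Finset.range (n + 1),
        (t (k + l) : ℂ) * α k * (starRingEnd ℂ) (α l)).re ∧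
    (∑ k ∈ Finset.range (n + 1), ∑ l ∈ Finset.range (n + 1),
        (t (k + l) : ℂ) * α k * (starRingEnd ℂ) (α l)).im = 0


/-! Coordinatewise, `S_λⁿ e_u` is a product of weights along the path from a vertex back
to `u`, so by (ii) the vectors `S_{λ⁽ⁱ⁾}ⁿ e_u` converge to `S_λⁿ e_u` coordinatewise. Their
norms are bounded by (iii), so they converge weakly (test against the dense span of the
`e_w`), and weak convergence together with convergence of norms is convergence in norm:
expand `‖x - y‖²`. The inner products then converge by continuity. -/

open Filter Topology
open scoped InnerProductSpace

section RadonRiesz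

variable {𝕜 E : Type*} [RCLike 𝕜] [NormedAddCommGroup E] [InnerProductSpace 𝕜 E]

theorem tendsto_inner_of_dense_span {ι : Type*} {l : Filter ι} {s : Set E}
    (hs : (Submodule.span 𝕜 s).topologicalClosure = ⊤) {x : ι → E} {y : E} {C : ℝ}
    (hC : ∀ i, ‖x i‖ ≤ C) (h : ∀ z ∈ s, Tendsto (fun i => ⟪x i, z⟫_𝕜) l (𝓝 ⟪y, z⟫_𝕜)) (z : E) :
    Tendsto (fun i => ⟪x i, z⟫_𝕜) l (𝓝 ⟪y, z⟫_𝕜) := by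
  have hequi : Equicontinuous fun i => ⇑(innerSL 𝕜 (x i)) := by
    have bdd_iff := (NormedSpace.equicontinuous_TFAE fun i => innerSL 𝕜 (x i)).out 5 1
    exact bdd_iff.mp ⟨C, fun i => (innerSL_apply_norm 𝕜 (x i)).trans_le (hC i)⟩
  set good : Set E := {z | Tendsto (fun i => ⟪x i, z⟫_𝕜) l (𝓝 ⟪y, z⟫_𝕜)}
  have hclosed : IsClosed good := hequi.isClosed_setOfPred_tendsto (innerSL 𝕜 y).continuous
  have hspan : (Submodule.span 𝕜 s : Set E) ⊆ good := by
    intro z hz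
    induction hz using Submodule.span_induction with
    | mem z hz => exact h z hz
    | zero => simpa only [good, Set.mem_ofPred_eq, inner_zero_right] using tendsto_const_nhds
    | add z w _ _ hz hw => simpa only [good, Set.mem_ofPred_eq, inner_add_right] using hz.add hw
    | smul c z _ hz => simpa only [good, Set.mem_ofPred_eq, inner_smul_right] using hz.const_mul c
  have hdense : closure (Submodule.span 𝕜 s : Set E) = Set.univ := by
    rw [← Submodule.topologicalClosure_coe, hs, Submodule.top_coe]
  exact (hdense ▸ hclosed.closure_subset_iff.mpr hspan) (Set.mem_univ z)

theorem tendsto_of_tendsto_inner_of_tendsto_norm {ι : Type*} {l : Filter ι} {x : ι → E} {y : E}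
    (hinner : Tendsto (fun i => ⟪x i, y⟫_𝕜) l (𝓝 ⟪y, y⟫_𝕜))
    (hnorm : Tendsto (fun i => ‖x i‖) l (𝓝 ‖y‖)) : Tendsto x l (𝓝 y) := by
  have hsq : Tendsto (fun i => ‖x i - y‖ ^ 2) l (𝓝 0) := by
    have hre := (RCLike.continuous_re.tendsto _).comp hinner
    have hlim := ((hnorm.pow 2).sub (hre.const_mul 2)).add_const (‖y‖ ^ 2)
    rw [Function.comp_def, inner_self_eq_norm_sq] at hlim
    convert hlim using 1
    · ext i; exact norm_sub_sq (𝕜 := 𝕜) (x i) y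
    · ring_nf
  rw [tendsto_iff_norm_sub_tendsto_zero]
  simpa [Function.comp_def, Real.sqrt_sq (norm_nonneg _)] using
    (Real.continuous_sqrt.tendsto 0).comp hsq

theorem HilbertBasis.tendsto_of_tendsto_repr_of_tendsto_norm {ι : Type*}
    (b : HilbertBasis ι 𝕜 E) {x : ℕ → E} {y : E}
    (hrepr : ∀ j, Tendsto (fun n => b.repr (x n) j) atTop (𝓝 (b.repr y j)))
    (hnorm : Tendsto (fun n => ‖x n‖) atTop (𝓝 ‖y‖)) : Tendsto x atTop (𝓝 y) := by
  obtain ⟨C, hC⟩ := hnorm.bddAbove_range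
  refine tendsto_of_tendsto_inner_of_tendsto_norm
    (tendsto_inner_of_dense_span b.dense_span (fun n => hC ⟨n, rfl⟩) ?_ y) hnorm
  rintro _ ⟨j, rfl⟩
  simp only [← inner_conj_symm _ (b j), ← b.repr_apply_apply]
  exact (RCLike.continuous_conj.tendsto _).comp (hrepr j)

open scoped lp in
theorem lp.tendsto_of_tendsto_apply_of_tendsto_norm {ι : Type*} {x : ℕ → ℓ²(ι, 𝕜)}
    {y : ℓ²(ι, 𝕜)}
    (h : ∀ j, Tendsto (fun n => x n j) atTop (𝓝 (y j)))
    (hnorm : Tendsto (fun n => ‖x n‖) atTop (𝓝 ‖y‖)) : Tendsto x atTop (𝓝 y) :=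
  (default : HilbertBasis ι 𝕜 ℓ²(ι, 𝕜)).tendsto_of_tendsto_repr_of_tendsto_norm h hnorm

end RadonRiesz

section PartialPowers

variable {H : Type*} [NormedAddCommGroup H] [InnerProductSpace ℂ H]

theorem mem_domain_pmapPow_succ_iff {S : H →ₗ.[ℂ] H} {n : ℕ} {x : H} :
    x ∈ (pmapPow S (n + 1)).domain ↔ ∃ hx : x ∈ S.domain, S ⟨x, hx⟩ ∈ (pmapPow S n).domain :=
  ⟨fun hx => (Submodule.mem_inf.mp hx).1,
    fun ⟨hx, hSx⟩ => Submodule.mem_inf.mpr ⟨⟨hx, hSx⟩, hx⟩⟩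

theorem powApp_succ {S : H →ₗ.[ℂ] H} {n : ℕ} {x : H} (hx : x ∈ S.domain)
    (hSx : S ⟨x, hx⟩ ∈ (pmapPow S n).domain) :
    powApp S (n + 1) x = powApp S n (S ⟨x, hx⟩) := by
  rw [powApp, dif_pos (mem_domain_pmapPow_succ_iff.mpr ⟨hx, hSx⟩), powApp, dif_pos hSx]
  rfl

end PartialPowers

namespace DirectedTree

variable {V : Type*} (T : DirectedTree V)

theorem coe_powApp_shift (lam : V → ℂ) {n : ℕ} {f : lp (fun _ : V => ℂ) 2}
    (hf : f ∈ (pmapPow (T.shift lam) n).domain) :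
    ⇑(powApp (T.shift lam) n f) = (T.lamMap lam)^[n] ⇑f := by
  induction n generalizing f with
  | zero => rw [powApp, dif_pos hf]; rfl
  | succ n ih =>
    obtain ⟨hf₁, hSf⟩ := mem_domain_pmapPow_succ_iff.mp hf
    rw [powApp_succ hf₁ hSf, ih hSf, Function.iterate_succ_apply]
    rfl

theorem tendsto_iterate_lamMap_apply {ι : Type*} {l : Filter ι} {lamSeq : ι → V → ℂ}
    {lam : V → ℂ} (h : ∀ v, T.nonRoot v → Tendsto (fun i => lamSeq i v) l (𝓝 (lam v)))
    (f : V → ℂ) (n : ℕ) (w : V) :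
    Tendsto (fun i => (T.lamMap (lamSeq i))^[n] f w) l (𝓝 ((T.lamMap lam)^[n] f w)) := by
  induction n generalizing w with
  | zero => exact tendsto_const_nhds
  | succ n ih =>
    simp only [Function.iterate_succ_apply', lamMap]
    split_ifs with hw
    · exact (h w hw).mul (ih (T.par w))
    · exact tendsto_const_nhds

end DirectedTree

/-- stability of mixed inner products of powers of weighted shifts under
pointwise convergence of weights together with convergence of the norms of powers. -/
theorem stmt6 {V : Type*} (T : DirectedTree V) (lamSeq : ℕ → V → ℂ) (lam : V → ℂ)
    (h1 : (Submodule.span ℂ (Set.range (eVec (V := V))) : Set (lp (fun _ : V => ℂ) 2)) ⊆ Dinf (T.shift lam)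
      ∧ ∀ i : ℕ, (Submodule.span ℂ (Set.range (eVec (V := V))) : Set (lp (fun _ : V => ℂ) 2)) ⊆ Dinf (T.shift (lamSeq i)))
    (h2 : ∀ v : V, T.nonRoot v →
      Filter.Tendsto (fun i : ℕ => lamSeq i v) Filter.atTop (nhds (lam v)))
    (h3 : ∀ (n : ℕ) (u : V),
      Filter.Tendsto (fun i : ℕ => ‖powApp (T.shift (lamSeq i)) n (eVec u)‖)
        Filter.atTop (nhds ‖powApp (T.shift lam) n (eVec u)‖)) :
    ∀ (u v : V) (m n : ℕ),
      Filter.Tendsto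
        (fun i : ℕ => innerPaper (powApp (T.shift (lamSeq i)) m (eVec u))
          (powApp (T.shift (lamSeq i)) n (eVec v)))
        Filter.atTop
        (nhds (innerPaper (powApp (T.shift lam) m (eVec u))
          (powApp (T.shift lam) n (eVec v)))) := by
  intro u v m n
  have he : ∀ w : V, eVec w ∈ Submodule.span ℂ (Set.range (eVec (V := V))) :=
    fun w => Submodule.subset_span ⟨w, rfl⟩
  have hpow : ∀ k w, Tendsto (fun i => powApp (T.shift (lamSeq i)) k (eVec w)) atTop
      (𝓝 (powApp (T.shift lam) k (eVec w))) := by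
    intro k w
    refine lp.tendsto_of_tendsto_apply_of_tendsto_norm (fun z => ?_) (h3 k w)
    simp only [T.coe_powApp_shift _ (h1.1 (he w) k), T.coe_powApp_shift _ (h1.2 _ (he w) k)]
    exact T.tendsto_iterate_lamMap_apply h2 _ k z
  exact (hpow n v).inner (hpow m u)
end
end

section
/- Let S_λ be a weighted shift on a directed tree T with weights λ = {λ_v}_{v∈V°} such that the linear span of {e_u : u ∈ V} is contained in D^∞(S_λ). Assume that for every u ∈ V having at least one child, {‖S_λ^n e_u‖²}_{n=0}^∞ is a Stieltjes moment sequence and {‖S_λ^{n+1} e_u‖²}_{n=0}^∞ is a determinate Stieltjes moment sequence. Then there exist a system {μ_u}_{u∈V} of Borel probability measures on [0,∞) and a system {ε_u}_{u∈V} of nonnegative real numbers such that for every u ∈ V and every Borel set σ ⊆ [0,∞), μ_u(σ) = ∑_{v∈Chi(u)} |λ_v|² ∫_σ (1/s) dμ_v(s) + ε_u δ₀(σ). -/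
open MeasureTheory ENNReal
open scoped NNReal
noncomputable section

/-!
Write `t_u(n) = ‖S_λⁿ e_u‖²`. Along the tree, `S_λⁿ⁺¹ e_u` splits into the orthogonal pieces
`λ_v S_λⁿ e_v`, `v ∈ Chi(u)`, so `t_u(n+1) = ∑_{v ∈ Chi(u)} |λ_v|² t_v(n)`. Let `μ_u` represent
`t_u` (`δ₀` at a leaf). Then `∑_v |λ_v|² μ_v` and `s dμ_u(s)` both represent the shifted sequence
`t_u(n+1)`, which is determinate (trivially so at a leaf, where it vanishes), so they coincide.
Dividing by `s` gives `∑_v |λ_v|² ∫_σ s⁻¹ dμ_v = μ_u(σ ∖ {0})`, and `ε_u := μ_u {0}`.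
-/

section PartialPowers

variable {H : Type*} [NormedAddCommGroup H] [InnerProductSpace ℂ H]

theorem exists_mem_domain_of_mem_pmapComp {P Q : H →ₗ.[ℂ] H} {f : H}
    (hf : f ∈ (pmapComp P Q).domain) : ∃ hQ : f ∈ Q.domain, Q ⟨f, hQ⟩ ∈ P.domain :=
  (Submodule.mem_inf.mp hf).1

theorem pmapComp_apply {P Q : H →ₗ.[ℂ] H} {f : H} (hf : f ∈ (pmapComp P Q).domain)
    (hQ : f ∈ Q.domain) (hP : Q ⟨f, hQ⟩ ∈ P.domain) :
    pmapComp P Q ⟨f, hf⟩ = P ⟨Q ⟨f, hQ⟩, hP⟩ :=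
  rfl

end PartialPowers

theorem lp.ofReal_norm_sq_eq_tsum {ι : Type*} {E : ι → Type*} [∀ i, NormedAddCommGroup (E i)]
    (g : lp E 2) : ENNReal.ofReal (‖g‖ ^ 2) = ∑' i, (‖g i‖₊ : ℝ≥0∞) ^ 2 := by
  have hp : (0 : ℝ) < (2 : ℝ≥0∞).toReal := by norm_num
  have h2 : (2 : ℝ≥0∞).toReal = ((2 : ℕ) : ℝ) := by norm_num
  have hsum := (lp.memℓp g).summable hp
  have hnorm := lp.norm_rpow_eq_tsum hp g
  simp only [h2, Real.rpow_natCast] at hsum hnorm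
  rw [hnorm, ENNReal.ofReal_tsum_of_nonneg (fun i => by positivity) hsum]
  refine tsum_congr fun i => ?_
  rw [ENNReal.ofReal_pow (norm_nonneg _), ofReal_norm, enorm_eq_nnnorm]

theorem MeasureTheory.Measure.restrict_compl_singleton_add_dirac {α : Type*} [MeasurableSpace α]
    [MeasurableSingletonClass α] (μ : Measure α) (a : α) :
    μ.restrict {a}ᶜ + μ {a} • Measure.dirac a = μ := by
  rw [← Measure.restrict_singleton, add_comm,
    Measure.restrict_add_restrict_compl (measurableSet_singleton a)]

theorem withDensity_coe_withDensity_inv (κ : Measure ℝ≥0) :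
    (κ.withDensity fun s => (s : ℝ≥0∞)).withDensity (fun s => (s : ℝ≥0∞)⁻¹) =
      κ.restrict {0}ᶜ := by
  refine (withDensity_mul κ measurable_coe_nnreal_ennreal
    measurable_coe_nnreal_ennreal.inv).symm.trans ?_
  rw [← withDensity_indicator_one (measurableSet_singleton 0).compl]
  congr 1
  funext s
  by_cases hs : s = 0
  · simp [hs]
  · simp [hs, ENNReal.mul_inv_cancel]

theorem momentSeq_nonneg {H : Type*} [NormedAddCommGroup H] [InnerProductSpace ℂ H]
    (S : H →ₗ.[ℂ] H) (f : H) (n : ℕ) : 0 ≤ momentSeq S f n :=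
  sq_nonneg _

section Moments

variable {κ ν : Measure ℝ≥0} {t : ℕ → ℝ}

theorem IsRepMeasure.nonneg (hκ : IsRepMeasure κ t) (n : ℕ) : 0 ≤ t n :=
  (hκ n).2 ▸ integral_nonneg fun s => by positivity

theorem isRepMeasure_iff_lintegral_pow (ht : ∀ n, 0 ≤ t n) :
    IsRepMeasure κ t ↔ ∀ n, ∫⁻ s, (s : ℝ≥0∞) ^ n ∂κ = ENNReal.ofReal (t n) := by
  have hmeas (n : ℕ) : AEMeasurable (fun s : ℝ≥0 => (s : ℝ≥0∞) ^ n) κ := by fun_prop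
  refine forall_congr' fun n => ⟨fun ⟨hint, htn⟩ => ?_, fun h => ?_⟩
  · rw [htn, ofReal_integral_eq_lintegral_ofReal hint (ae_of_all _ fun s => by positivity)]
    simp
  · have hfin : ∫⁻ s, (s : ℝ≥0∞) ^ n ∂κ ≠ ∞ := h ▸ ENNReal.ofReal_ne_top
    have hcoe : (fun s : ℝ≥0 => (s : ℝ) ^ n) = fun s : ℝ≥0 => ((s : ℝ≥0∞) ^ n).toReal := by
      funext s
      simp
    rw [hcoe]
    refine ⟨integrable_toReal_of_lintegral_ne_top (hmeas n) hfin, ?_⟩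
    rw [integral_toReal (hmeas n) (ae_lt_top' (hmeas n) hfin), h, ENNReal.toReal_ofReal (ht n)]

theorem IsRepMeasure.lintegral_pow (hκ : IsRepMeasure κ t) (n : ℕ) :
    ∫⁻ s, (s : ℝ≥0∞) ^ n ∂κ = ENNReal.ofReal (t n) :=
  (isRepMeasure_iff_lintegral_pow hκ.nonneg).mp hκ n

theorem IsRepMeasure.withDensity_coe (hκ : IsRepMeasure κ t) :
    IsRepMeasure (κ.withDensity fun s => (s : ℝ≥0∞)) fun n => t (n + 1) := by
  refine (isRepMeasure_iff_lintegral_pow fun n => hκ.nonneg (n + 1)).mpr fun n => ?_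
  rw [lintegral_withDensity_eq_lintegral_mul κ measurable_coe_nnreal_ennreal (by fun_prop),
    ← hκ.lintegral_pow (n + 1)]
  simp only [Pi.mul_apply, pow_succ, mul_comm]

theorem isDetStieltjesMoment_of_isRepMeasure_zero (h : IsRepMeasure 0 t) :
    IsDetStieltjesMoment t := by
  refine ⟨0, h, fun ν hν => ?_⟩
  have hmass := hν.lintegral_pow 0
  rw [← h.lintegral_pow 0] at hmass
  simpa using hmass

theorem IsDetStieltjesMoment.withDensity_inv_eq (hdet : IsDetStieltjesMoment fun n => t (n + 1))
    (hκ : IsRepMeasure κ t) (hν : IsRepMeasure ν fun n => t (n + 1)) :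
    ν.withDensity (fun s => (s : ℝ≥0∞)⁻¹) = κ.restrict {0}ᶜ := by
  rw [hdet.unique hν hκ.withDensity_coe, withDensity_coe_withDensity_inv]

end Moments

namespace DirectedTree

variable {V : Type*} (T : DirectedTree V) (lam : V → ℂ)

theorem pmapPow_shift_coe (n : ℕ) (f : lp (fun _ : V => ℂ) 2)
    (hf : f ∈ (pmapPow (T.shift lam) n).domain) :
    ⇑(pmapPow (T.shift lam) n ⟨f, hf⟩) = (T.lamMap lam)^[n] f := by
  induction n generalizing f with
  | zero => rfl
  | succ n ih =>
    obtain ⟨hQ, hP⟩ := exists_mem_domain_of_mem_pmapComp hf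
    rw [show pmapPow (T.shift lam) (n + 1) ⟨f, hf⟩ = _ from pmapComp_apply hf hQ hP, ih _ hP,
      Function.iterate_succ_apply]
    rfl

theorem par_eq_of_edge {u v : V} (he : T.edge u v) : T.par v = u := by
  have hv : ∃ w, T.edge w v := ⟨u, he⟩
  rw [par, dif_pos hv]
  exact T.parent_unique v _ _ hv.choose_spec he

open Classical in
/-- The weights extended by `0` at the roots, so that `Λ_T f = extWeight * f ∘ par`
holds everywhere despite the junk value `par r = r` at a root `r`. -/
def extWeight (v : V) : ℂ := if T.nonRoot v then lam v else 0

theorem lamMap_apply (f : V → ℂ) (v : V) :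
    T.lamMap lam f v = T.extWeight lam v * f (T.par v) := by
  unfold lamMap extWeight
  split_ifs <;> simp

theorem lamMap_iterate_apply (n : ℕ) (f : V → ℂ) (v : V) :
    (T.lamMap lam)^[n] f v = T.pathProd (T.extWeight lam) n v * f (T.par^[n] v) := by
  induction n generalizing v with
  | zero => simp [pathProd]
  | succ n ih =>
    simp only [Function.iterate_succ_apply', lamMap_apply, ih, pathProd, Finset.prod_range_succ',
      Function.iterate_zero_apply, ← Function.iterate_succ_apply T.par]
    ring

theorem lamMap_eVec (u : V) : T.lamMap lam (eVec u) = (T.chi u).indicator lam := by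
  funext v
  by_cases he : T.edge u v
  · rw [Set.indicator_of_mem (show v ∈ T.chi u from he), lamMap_apply, par_eq_of_edge T he,
      extWeight, if_pos ⟨u, he⟩]
    simp [eVec]
  · rw [Set.indicator_of_notMem (show v ∉ T.chi u from he), lamMap_apply]
    by_cases hv : T.nonRoot v
    · have hpar : T.par v ≠ u := by
        obtain ⟨w, hw⟩ := hv
        rw [par_eq_of_edge T hw]
        rintro rfl
        exact he hw
      simp [eVec, hpar]
    · simp [extWeight, hv]

theorem tsum_nnnorm_sq_lamMap_iterate (n : ℕ) (f : V → ℂ) :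
    ∑' x, (‖(T.lamMap lam)^[n] f x‖₊ : ℝ≥0∞) ^ 2 =
      ∑' v, (‖f v‖₊ : ℝ≥0∞) ^ 2 *
        ∑' x : T.par^[n] ⁻¹' {v}, (‖T.pathProd (T.extWeight lam) n x‖₊ : ℝ≥0∞) ^ 2 := by
  rw [← ENNReal.tsum_fiberwise _ (T.par^[n])]
  refine tsum_congr fun v => ?_
  rw [← ENNReal.tsum_mul_left]
  refine tsum_congr fun x => ?_
  have hx : T.par^[n] x = v := x.2
  rw [lamMap_iterate_apply, hx, nnnorm_mul, ENNReal.coe_mul, mul_pow, mul_comm]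

/-- `‖S_λⁿ e_u‖²`, computed through `Λ_T` and valued in `ℝ≥0∞`. -/
def shiftMoment (u : V) (n : ℕ) : ℝ≥0∞ :=
  ∑' x, (‖(T.lamMap lam)^[n] (eVec u) x‖₊ : ℝ≥0∞) ^ 2

theorem shiftMoment_zero (u : V) : T.shiftMoment lam u 0 = 1 := by
  rw [shiftMoment, tsum_eq_single u fun x hx => by simp [eVec, hx]]
  simp [eVec]

theorem shiftMoment_eq_tsum_fiber (v : V) (n : ℕ) :
    T.shiftMoment lam v n =
      ∑' x : T.par^[n] ⁻¹' {v}, (‖T.pathProd (T.extWeight lam) n x‖₊ : ℝ≥0∞) ^ 2 := by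
  rw [shiftMoment, tsum_nnnorm_sq_lamMap_iterate, tsum_eq_single v fun w hw => by simp [eVec, hw]]
  simp [eVec]

theorem shiftMoment_succ (u : V) (n : ℕ) :
    T.shiftMoment lam u (n + 1) =
      ∑' v : {v // T.edge u v}, (‖lam v‖₊ : ℝ≥0∞) ^ 2 * T.shiftMoment lam v n := by
  rw [shiftMoment, Function.iterate_succ_apply, lamMap_eVec, tsum_nnnorm_sq_lamMap_iterate]
  refine (tsum_subtype (T.chi u) fun v => (‖lam v‖₊ : ℝ≥0∞) ^ 2 * T.shiftMoment lam v n).trans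
    (tsum_congr fun v => ?_) |>.symm
  by_cases hv : v ∈ T.chi u <;> simp [hv, shiftMoment_eq_tsum_fiber]

theorem shiftMoment_of_isEmpty (u : V) [IsEmpty {v // T.edge u v}] (n : ℕ) :
    T.shiftMoment lam u n = ∫⁻ s, (s : ℝ≥0∞) ^ n ∂Measure.dirac (0 : ℝ≥0) := by
  cases n with
  | zero => simp [shiftMoment_zero]
  | succ n => simp [shiftMoment_succ]

theorem ofReal_momentSeq_eVec {u : V} (hu : eVec u ∈ Dinf (T.shift lam)) (n : ℕ) :
    ENNReal.ofReal (momentSeq (T.shift lam) (eVec u) n) = T.shiftMoment lam u n := by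
  rw [momentSeq, powApp, dif_pos (hu n), lp.ofReal_norm_sq_eq_tsum, shiftMoment]
  simp only [pmapPow_shift_coe]

theorem isRepMeasure_momentSeq_iff {κ : Measure ℝ≥0} {u : V} (hu : eVec u ∈ Dinf (T.shift lam)) :
    IsRepMeasure κ (momentSeq (T.shift lam) (eVec u)) ↔
      ∀ n, ∫⁻ s, (s : ℝ≥0∞) ^ n ∂κ = T.shiftMoment lam u n := by
  rw [isRepMeasure_iff_lintegral_pow (momentSeq_nonneg _ _)]
  simp only [T.ofReal_momentSeq_eVec lam hu]

theorem isRepMeasure_dirac_momentSeq {u : V} (hu : eVec u ∈ Dinf (T.shift lam))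
    [IsEmpty {v // T.edge u v}] :
    IsRepMeasure (Measure.dirac 0) (momentSeq (T.shift lam) (eVec u)) :=
  (T.isRepMeasure_momentSeq_iff lam hu).mpr fun n => (T.shiftMoment_of_isEmpty lam u n).symm

theorem isRepMeasure_sum_children {μ : V → Measure ℝ≥0} (hD : ∀ w, eVec w ∈ Dinf (T.shift lam))
    (hμ : ∀ w, IsRepMeasure (μ w) (momentSeq (T.shift lam) (eVec w))) (u : V) :
    IsRepMeasure (Measure.sum fun v : {v // T.edge u v} => (‖lam v‖₊ : ℝ≥0∞) ^ 2 • μ v)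
      (fun n => momentSeq (T.shift lam) (eVec u) (n + 1)) := by
  refine (isRepMeasure_iff_lintegral_pow fun n => momentSeq_nonneg _ _ (n + 1)).mpr fun n => ?_
  simp only [lintegral_sum_measure, lintegral_smul_measure, smul_eq_mul,
    T.ofReal_momentSeq_eVec lam (hD u), T.shiftMoment_succ]
  exact tsum_congr fun v => congrArg _ ((T.isRepMeasure_momentSeq_iff lam (hD v)).mp (hμ v) n)

theorem consistentAt_of_withDensity_inv {μ : V → Measure ℝ≥0} [∀ v, IsFiniteMeasure (μ v)]
    {u : V}
    (h : (Measure.sum fun v : {v // T.edge u v} => (‖lam v‖₊ : ℝ≥0∞) ^ 2 • μ v).withDensity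
      (fun s => (s : ℝ≥0∞)⁻¹) = (μ u).restrict {0}ᶜ) :
    consistentAt T lam μ (fun w => (μ w {0}).toNNReal) u := by
  intro σ hσ
  have hchildren : ∑' v : {v // T.edge u v},
      (‖lam v‖₊ : ℝ≥0∞) ^ 2 * ∫⁻ s in σ, (s : ℝ≥0∞)⁻¹ ∂μ v = (μ u).restrict {0}ᶜ σ := by
    rw [← h, withDensity_apply _ hσ, Measure.restrict_sum _ hσ, lintegral_sum_measure]
    simp only [Measure.restrict_smul, lintegral_smul_measure, smul_eq_mul]
  rw [hchildren, ENNReal.coe_toNNReal (measure_ne_top _ _)]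
  conv_lhs => rw [← Measure.restrict_compl_singleton_add_dirac (μ u) 0]
  rfl

end DirectedTree

/-- under determinacy, a consistent system of Borel probability measures
(and nonnegative constants) exists. -/
theorem stmt10 {V : Type*} (T : DirectedTree V) (lam : V → ℂ)
    (hdom : (Submodule.span ℂ (Set.range (eVec (V := V))) : Set (lp (fun _ : V => ℂ) 2)) ⊆ Dinf (T.shift lam))
    (h : ∀ u : V, (∃ v : V, T.edge u v) →
      IsStieltjesMoment (momentSeq (T.shift lam) (eVec u))
      ∧ IsDetStieltjesMoment (fun n => momentSeq (T.shift lam) (eVec u) (n + 1))) :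
    ∃ (μ : V → Measure ℝ≥0) (ε : V → ℝ≥0),
      (∀ v : V, IsProbabilityMeasure (μ v)) ∧ ∀ u : V, consistentAt T lam μ ε u := by
  have hD (w : V) : eVec w ∈ Dinf (T.shift lam) := hdom (Submodule.subset_span ⟨w, rfl⟩)
  have hS (u : V) : IsStieltjesMoment (momentSeq (T.shift lam) (eVec u)) := by
    by_cases hu : ∃ v, T.edge u v
    · exact (h u hu).1
    · have := (isEmpty_subtype _).mpr (not_exists.mp hu)
      exact ⟨_, T.isRepMeasure_dirac_momentSeq lam (hD u)⟩
  choose μ hμ using hS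
  have hprob (u : V) : IsProbabilityMeasure (μ u) :=
    ⟨by simpa [T.shiftMoment_zero] using (T.isRepMeasure_momentSeq_iff lam (hD u)).mp (hμ u) 0⟩
  refine ⟨μ, _, hprob, fun u => T.consistentAt_of_withDensity_inv lam ?_⟩
  have hν := T.isRepMeasure_sum_children lam hD hμ u
  have hdet : IsDetStieltjesMoment fun n => momentSeq (T.shift lam) (eVec u) (n + 1) := by
    by_cases hu : ∃ v, T.edge u v
    · exact (h u hu).2
    · have := (isEmpty_subtype _).mpr (not_exists.mp hu)
      rw [Measure.sum_of_isEmpty] at hν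
      exact isDetStieltjesMoment_of_isRepMeasure_zero hν
  exact hdet.withDensity_inv_eq (hμ u) hν
end
end
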